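/- Every rooted binary orchard network is recoverable; that is, if N is an orchard network on X, then the lowest stable ancestor of X equals the root, equivalently N has no arc (u, v) whose deletion disconnects N such that v is an ancestor of every leaf in X. -/

import Mathlib

open scoped Classical

/-- A directed graph with a finite vertex set and a multiset of arcs
(so that parallel arcs can be represented). -/
structure Digraph' (α : Type*) where
  V : Finset α
  E : Multiset (α × α)

namespace Digraph'

variable {α : Type*} [DecidableEq α]

/-- In-degree of a vertex. -/
noncomputable def inDeg (G : Digraph' α) (v : α) : ℕ :=
  (G.E.filter (fun e => e.2 = v)).card

/-- Out-degree of a vertex. -/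
noncomputable def outDeg (G : Digraph' α) (v : α) : ℕ :=
  (G.E.filter (fun e => e.1 = v)).card

/-- A (directed) path, given as its nonempty list of vertices. -/
def IsPath (G : Digraph' α) (p : List α) : Prop :=
  p ≠ [] ∧ (∀ v ∈ p, v ∈ G.V) ∧ p.Chain' (fun u v => (u, v) ∈ G.E)

/-- A directed path from `u` to `v`. -/
def PathFrom (G : Digraph' α) (u v : α) (p : List α) : Prop :=
  G.IsPath p ∧ p.head? = some u ∧ p.getLast? = some v

/-- There is a directed path from `u` to `v` (possibly trivial). -/
def Reaches (G : Digraph' α) (u v : α) : Prop := ∃ p, G.PathFrom u v p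

/-- Acyclicity: no arc whose head reaches its tail. -/
def Acyclic (G : Digraph' α) : Prop := ∀ e ∈ G.E, ¬ G.Reaches e.2 e.1

/-- `u` is a stable ancestor of `X'` (w.r.t. root `ρ`): every path from
`ρ` to each `x ∈ X'` traverses `u`. -/
def StableAncestor (G : Digraph' α) (ρ : α) (X' : Finset α) (u : α) : Prop :=
  ∀ x ∈ X', ∀ p, G.PathFrom ρ x p → u ∈ p

/-- `u` is a lowest stable ancestor of `X'`: it is a stable ancestor and
no distinct stable ancestor of `X'` is a descendant of `u`. -/
def IsLowestSA (G : Digraph' α) (ρ : α) (X' : Finset α) (u : α) : Prop :=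
  G.StableAncestor ρ X' u ∧
    ∀ v, G.StableAncestor ρ X' v → v ≠ u → ¬ G.Reaches u v

/-- Delete a vertex together with all incident arcs. -/
noncomputable def deleteVertex (G : Digraph' α) (w : α) : Digraph' α :=
  ⟨G.V.erase w, G.E.filter (fun e => e.1 ≠ w ∧ e.2 ≠ w)⟩

/-- `G'` is obtained from `G` by suppressing the in-degree-one
out-degree-one vertex `w` (replacing `(p,w)`, `(w,c)` by the arc `(p,c)`). -/
def Suppress (G : Digraph' α) (w : α) (G' : Digraph' α) : Prop :=
  G.inDeg w = 1 ∧ G.outDeg w = 1 ∧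
  ∃ p c, (p, w) ∈ G.E ∧ (w, c) ∈ G.E ∧
    G'.V = G.V.erase w ∧ G'.E = (G.deleteVertex w).E + {(p, c)}

/-- `G'` is obtained from `G` by deleting exactly one arc of a pair of
parallel arcs. -/
def DeleteParallel (G G' : Digraph' α) : Prop :=
  ∃ e : α × α, 2 ≤ G.E.count e ∧ G'.V = G.V ∧ G'.E = G.E.erase e

/-- One simplification step: suppress a degree-(1,1) vertex or delete a
parallel arc. -/
def SimpStep (G G' : Digraph' α) : Prop :=
  (∃ w, G.Suppress w G') ∨ G.DeleteParallel G'

/-- `G'` is the full simplification of `G`. -/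
def FullSimp (G G' : Digraph' α) : Prop :=
  Relation.ReflTransGen (SimpStep (α := α)) G G' ∧ ∀ G'', ¬ SimpStep G' G''

/-- The path graph of `G` on `A` (w.r.t. the vertex `r`): all vertices and
arcs lying on a directed path from `r` to a leaf in `A`. -/
noncomputable def pathGraph (G : Digraph' α) (r : α) (A : Finset α) : Digraph' α :=
  ⟨G.V.filter (fun v => ∃ x ∈ A, ∃ p, G.PathFrom r x p ∧ v ∈ p),
   G.E.filter (fun e => ∃ x ∈ A, ∃ p, G.PathFrom r x p ∧ e ∈ p.zip p.tail)⟩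

/-- Isomorphism of digraphs fixing every element of `A`. -/
def IsoOn (G1 G2 : Digraph' α) (A : Finset α) : Prop :=
  ∃ φ : α → α, Set.BijOn φ ↑G1.V ↑G2.V ∧ (∀ x ∈ A, φ x = x) ∧
    G2.E = G1.E.map (fun e => (φ e.1, φ e.2))

end Digraph'

/-- A rooted binary phylogenetic network on the leaf set `X`. -/
structure PhyloNet (α : Type*) where
  G : Digraph' α
  root : α
  X : Finset α
  root_mem : root ∈ G.V
  wf : ∀ e ∈ G.E, e.1 ∈ G.V ∧ e.2 ∈ G.V
  noParallel : ∀ e : α × α, G.E.count e ≤ 1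
  acyclic : G.Acyclic
  reach : ∀ v ∈ G.V, G.Reaches root v
  binary :
    (G.V = {root} ∧ G.E = 0 ∧ X = {root}) ∨
    (G.inDeg root = 0 ∧ G.outDeg root = 2 ∧
     (∀ x ∈ X, x ∈ G.V ∧ G.inDeg x = 1 ∧ G.outDeg x = 0) ∧
     (∀ v ∈ G.V, G.outDeg v = 0 → v ∈ X) ∧
     (∀ v ∈ G.V, v ≠ root → v ∉ X →
       (G.inDeg v = 1 ∧ G.outDeg v = 2) ∨ (G.inDeg v = 2 ∧ G.outDeg v = 1)))

namespace PhyloNet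

variable {α : Type*} [DecidableEq α]

/-- `N` is recoverable: the root is the only stable ancestor of `X`. -/
def Recoverable (N : PhyloNet α) : Prop :=
  ∀ v, N.G.StableAncestor N.root N.X v → v = N.root

/-- `{a, b}` is a cherry: two distinct leaves with a common parent. -/
def Cherry (N : PhyloNet α) (a b : α) : Prop :=
  a ∈ N.X ∧ b ∈ N.X ∧ a ≠ b ∧ ∃ p, (p, a) ∈ N.G.E ∧ (p, b) ∈ N.G.E

/-- `(a, b)` is a reticulated cherry: leaves `a, b` whose parents `p_a, p_b`
satisfy that `(p_a, p_b)` is an arc and `p_b` is a reticulation. -/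
def RetCherry (N : PhyloNet α) (a b : α) : Prop :=
  a ∈ N.X ∧ b ∈ N.X ∧ a ≠ b ∧
  ∃ pa pb, (pa, a) ∈ N.G.E ∧ (pb, b) ∈ N.G.E ∧ (pa, pb) ∈ N.G.E ∧
    N.G.inDeg pb = 2

/-- `N'` is obtained from `N` by reducing the leaf `b` of the cherry `{a, b}`:
delete `b` and its incident arc and suppress the resulting degree-two
vertex (or, if the common parent is the root, replace `N` by the
single-vertex network on `a`). -/
def ReduceCherry (N : PhyloNet α) (a b : α) (N' : PhyloNet α) : Prop :=
  N.Cherry a b ∧ N'.X = N.X.erase b ∧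
  ∃ p, (p, a) ∈ N.G.E ∧ (p, b) ∈ N.G.E ∧
    ((p = N.root ∧ N'.G.V = {a} ∧ N'.G.E = 0 ∧ N'.root = a) ∨
     (p ≠ N.root ∧ N'.root = N.root ∧ (N.G.deleteVertex b).Suppress p N'.G))

/-- `N'` is obtained from `N` by cutting the reticulated cherry `(a, b)`:
delete the reticulation arc `(p_a, p_b)` and suppress the two resulting
degree-two vertices. -/
def CutRetCherry (N : PhyloNet α) (a b : α) (N' : PhyloNet α) : Prop :=
  a ∈ N.X ∧ b ∈ N.X ∧ a ≠ b ∧ N'.X = N.X ∧ N'.root = N.root ∧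
  ∃ pa pb, (pa, a) ∈ N.G.E ∧ (pb, b) ∈ N.G.E ∧ (pa, pb) ∈ N.G.E ∧
    N.G.inDeg pb = 2 ∧
    ∃ G1 : Digraph' α, G1.V = N.G.V ∧ G1.E = N.G.E.erase (pa, pb) ∧
      ∃ G2 : Digraph' α, G1.Suppress pa G2 ∧ G2.Suppress pb N'.G

/-- One cherry-picking step: reduce a leaf of a cherry or cut a
reticulated cherry. -/
def PickStep (N N' : PhyloNet α) : Prop :=
  (∃ a b, N.ReduceCherry a b N') ∨ (∃ a b, N.CutRetCherry a b N')

/-- `N` is an orchard network: some sequence of cherry-picking operations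
reduces it to a single vertex. -/
def IsOrchard (N : PhyloNet α) : Prop :=
  ∃ M : PhyloNet α, Relation.ReflTransGen (PickStep (α := α)) N M ∧ M.G.V.card = 1

/-- `H` is the network exhibited by `N` on `A`: the full simplification of
the path graph of `N` on `A`, rooted at the lowest stable ancestor of `A`. -/
def Exhibits (N : PhyloNet α) (A : Finset α) (H : Digraph' α) : Prop :=
  ∃ r, N.G.IsLowestSA N.root A r ∧ Digraph'.FullSimp (N.G.pathGraph r A) H

end PhyloNet

/-!
Recoverability is inherited backwards along cherry-picking: if `N ⟶ N'` is a cherry-picking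
step and `N'` is recoverable, so is `N`; a single-vertex network is trivially recoverable.

An arc of `N'` is a path of `N` through the suppressed vertices, so a stable ancestor of `N`
that is not suppressed is still one in `N'`, hence the root. A suppressed vertex of in-degree
one that is stable passes stability on to its parent; that parent is not the root, for the
root's other child reaches a leaf while avoiding it. Finally the reticulation `p_b` of a
reticulated cherry `(a, b)` is never stable: its only child is the leaf `b`, so paths to `a`
avoid it.
-/

open Relation

namespace Digraph'

variable {α : Type*}

def Adj (G : Digraph' α) (a b : α) : Prop := (a, b) ∈ G.E

def WellFormed (G : Digraph' α) : Prop := ∀ e ∈ G.E, e.1 ∈ G.V ∧ e.2 ∈ G.V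

section Paths

variable {G : Digraph' α} {u v : α}

theorem pathFrom_singleton (hu : u ∈ G.V) : G.PathFrom u u [u] :=
  ⟨⟨List.cons_ne_nil _ _, by simpa using hu, List.isChain_singleton _⟩, rfl, rfl⟩

theorem pathFrom_pair (hwf : G.WellFormed) (h : G.Adj u v) : G.PathFrom u v [u, v] :=
  ⟨⟨List.cons_ne_nil _ _, by simp [(hwf _ h).1, (hwf _ h).2], List.isChain_pair.2 h⟩, rfl, rfl⟩

theorem Reaches.left_mem (h : G.Reaches u v) : u ∈ G.V := by
  obtain ⟨p, ⟨-, hV, -⟩, hhead, -⟩ := h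
  exact hV u (List.mem_of_mem_head? hhead)

theorem Reaches.reflTransGen (h : G.Reaches u v) : ReflTransGen G.Adj u v := by
  obtain ⟨p, ⟨hne, -, hchain⟩, hhead, hlast⟩ := h
  rw [List.head?_eq_some_head hne, Option.some_inj] at hhead
  rw [List.getLast?_eq_some_getLast hne, Option.some_inj] at hlast
  exact hhead ▸ hlast ▸ List.relationReflTransGen_of_exists_isChain p hchain hne

theorem reaches_of_reflTransGen (hwf : G.WellFormed) (hu : u ∈ G.V)
    (h : ReflTransGen G.Adj u v) : G.Reaches u v := by
  obtain ⟨l, hne, hchain, hhead, hlast⟩ := List.exists_isChain_ne_nil_of_relationReflTransGen h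
  have hV : ∀ w ∈ l, w ∈ G.V :=
    hchain.induction _ _ (fun _ _ hxy _ => (hwf _ hxy).2) fun _ => hhead ▸ hu
  exact ⟨l, ⟨hne, hV, hchain⟩, by rw [List.head?_eq_some_head hne, hhead],
    by rw [List.getLast?_eq_some_getLast hne, hlast]⟩

theorem Acyclic.not_reflTransGen (hacy : G.Acyclic) (hwf : G.WellFormed) (h : G.Adj u v) :
    ¬ ReflTransGen G.Adj v u :=
  fun hvu => hacy (u, v) h (reaches_of_reflTransGen hwf (hwf _ h).2 hvu)

theorem Acyclic.ne_of_adj (hacy : G.Acyclic) (hwf : G.WellFormed) (h : G.Adj u v) : u ≠ v := by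
  rintro rfl
  exact hacy.not_reflTransGen hwf h .refl

/-- Among the descendants of `v`, one with fewest descendants is a sink. -/
theorem Acyclic.exists_sink (hacy : G.Acyclic) (hwf : G.WellFormed) (hv : v ∈ G.V) :
    ∃ x ∈ G.V, ReflTransGen G.Adj v x ∧ ∀ y, ¬ G.Adj x y := by
  let desc (x : α) : Finset α := G.V.filter (ReflTransGen G.Adj x)
  obtain ⟨x, hx, hmin⟩ := (desc v).exists_min_image (fun x => (desc x).card)
    ⟨v, Finset.mem_filter.2 ⟨hv, .refl⟩⟩
  obtain ⟨hxV, hvx⟩ := Finset.mem_filter.1 hx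
  refine ⟨x, hxV, hvx, fun y hxy => ?_⟩
  have hsub : desc y ⊂ desc x := by
    refine (Finset.ssubset_iff_of_subset fun z hz => ?_).2 ⟨x, ?_, fun hx => ?_⟩
    · obtain ⟨hzV, hyz⟩ := Finset.mem_filter.1 hz
      exact Finset.mem_filter.2 ⟨hzV, .head hxy hyz⟩
    · exact Finset.mem_filter.2 ⟨hxV, .refl⟩
    · exact hacy.not_reflTransGen hwf hxy (Finset.mem_filter.1 hx).2
  have hy : y ∈ desc v := Finset.mem_filter.2 ⟨(hwf _ hxy).2, hvx.tail hxy⟩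
  exact (hmin y hy).not_gt (Finset.card_lt_card hsub)

end Paths

section DeleteVertex

variable [DecidableEq α] {G : Digraph' α} {a b u v w : α}

theorem adj_deleteVertex : (G.deleteVertex w).Adj a b ↔ G.Adj a b ∧ a ≠ w ∧ b ≠ w :=
  Multiset.mem_filter

theorem WellFormed.deleteVertex (hwf : G.WellFormed) (w : α) : (G.deleteVertex w).WellFormed :=
  fun e he => by
    obtain ⟨he, h1, h2⟩ := Multiset.mem_filter.1 he
    exact ⟨Finset.mem_erase.2 ⟨h1, (hwf e he).1⟩, Finset.mem_erase.2 ⟨h2, (hwf e he).2⟩⟩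

theorem reaches_deleteVertex (hwf : G.WellFormed) (hu : u ∈ G.V) (huw : u ≠ w)
    (h : ReflTransGen (G.deleteVertex w).Adj u v) : (G.deleteVertex w).Reaches u v :=
  reaches_of_reflTransGen (hwf.deleteVertex w) (Finset.mem_erase.2 ⟨huw, hu⟩) h

theorem isPath_deleteVertex {p : List α} : (G.deleteVertex w).IsPath p ↔ G.IsPath p ∧ w ∉ p := by
  constructor
  · rintro ⟨hne, hV, hchain⟩
    exact ⟨⟨hne, fun x hx => (Finset.mem_erase.1 (hV x hx)).2,
      hchain.imp fun _ _ h => (adj_deleteVertex.1 h).1⟩, fun hw => (Finset.mem_erase.1 (hV w hw)).1 rfl⟩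
  · rintro ⟨⟨hne, hV, hchain⟩, hw⟩
    exact ⟨hne, fun x hx => Finset.mem_erase.2 ⟨ne_of_mem_of_not_mem hx hw, hV x hx⟩,
      hchain.imp_of_mem_imp fun _ _ hx hy h =>
        adj_deleteVertex.2 ⟨h, ne_of_mem_of_not_mem hx hw, ne_of_mem_of_not_mem hy hw⟩⟩

theorem stableAncestor_iff {ρ : α} {X : Finset α} :
    G.StableAncestor ρ X u ↔ ∀ x ∈ X, ¬ (G.deleteVertex u).Reaches ρ x :=
  ⟨fun h x hx ⟨p, hp, hhead, hlast⟩ =>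
      (isPath_deleteVertex.1 hp).2 (h x hx p ⟨(isPath_deleteVertex.1 hp).1, hhead, hlast⟩),
    fun h x hx p hp => by_contra fun hu => h x hx ⟨p, isPath_deleteVertex.2 ⟨hp.1, hu⟩, hp.2⟩⟩

theorem reflTransGen_deleteVertex_of_not_reflTransGen (h : ReflTransGen G.Adj a b)
    (hw : ¬ ReflTransGen G.Adj a w) : ReflTransGen (G.deleteVertex w).Adj a b := by
  induction h with
  | refl => exact .refl
  | tail hac hcb ih =>
    exact ih.tail (adj_deleteVertex.2 ⟨hcb, fun h => hw (h ▸ hac), fun h => hw (h ▸ hac.tail hcb)⟩)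

theorem reflTransGen_deleteVertex_of_unique_parent {g : α} (hpar : ∀ c, G.Adj c u → c = g)
    (hau : a ≠ u) (h : ReflTransGen (G.deleteVertex g).Adj a b) :
    ReflTransGen (G.deleteVertex u).Adj a b := by
  suffices ReflTransGen (G.deleteVertex u).Adj a b ∧ b ≠ u from this.1
  induction h with
  | refl => exact ⟨.refl, hau⟩
  | tail _ hcb ih =>
    obtain ⟨hcb, hcg, -⟩ := adj_deleteVertex.1 hcb
    have hbu : _ ≠ u := fun h => hcg (hpar _ (h ▸ hcb))
    exact ⟨ih.1.tail (adj_deleteVertex.2 ⟨hcb, ih.2, hbu⟩), hbu⟩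

theorem StableAncestor.of_unique_parent (hwf : G.WellFormed) {ρ g : α} {X : Finset α}
    (hu : G.StableAncestor ρ X u) (hρu : ρ ≠ u) (hpar : ∀ c, G.Adj c u → c = g) :
    G.StableAncestor ρ X g := by
  rw [stableAncestor_iff] at hu ⊢
  intro x hx hreach
  exact hu x hx (reaches_deleteVertex hwf (Finset.mem_of_mem_erase hreach.left_mem) hρu
    (reflTransGen_deleteVertex_of_unique_parent hpar hρu hreach.reflTransGen))

/-- The sibling `w` reaches a sink, and that walk cannot pass through `ρ` (acyclicity) nor,
therefore, through `u`. -/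
theorem not_stableAncestor_of_sibling (hwf : G.WellFormed) (hacy : G.Acyclic) {ρ : α}
    {X : Finset α} (hsink : ∀ x ∈ G.V, (∀ y, ¬ G.Adj x y) → x ∈ X) (hρu : G.Adj ρ u)
    (hpar : ∀ c, G.Adj c u → c = ρ) (hρw : G.Adj ρ w) (hwu : w ≠ u) :
    ¬ G.StableAncestor ρ X u := by
  rw [stableAncestor_iff]
  push Not
  obtain ⟨x, hxV, hwx, hx⟩ := hacy.exists_sink hwf (hwf _ hρw).2
  have hρu' := hacy.ne_of_adj hwf hρu
  have hwx' : ReflTransGen (G.deleteVertex u).Adj w x :=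
    reflTransGen_deleteVertex_of_unique_parent hpar hwu
      (reflTransGen_deleteVertex_of_not_reflTransGen hwx (hacy.not_reflTransGen hwf hρw))
  exact ⟨x, hsink x hxV hx, reaches_deleteVertex hwf (hwf _ hρw).1 hρu'
    (.head (adj_deleteVertex.2 ⟨hρw, hρu', hwu⟩) hwx')⟩

theorem not_stableAncestor_of_children_sinks (hwf : G.WellFormed) {ρ x : α} {X : Finset α}
    (hx : x ∈ X) (hρx : G.Reaches ρ x) (hρv : ρ ≠ v) (hxv : x ≠ v)
    (hchild : ∀ c, G.Adj v c → c ≠ x ∧ ∀ y, ¬ G.Adj c y) :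
    ¬ G.StableAncestor ρ X v := by
  rw [stableAncestor_iff]
  push Not
  suffices ∀ c, ReflTransGen G.Adj ρ c →
      c = v ∨ G.Adj v c ∨ (c ≠ v ∧ ReflTransGen (G.deleteVertex v).Adj ρ c) by
    obtain h | h | ⟨-, h⟩ := this x hρx.reflTransGen
    · exact absurd h hxv
    · exact absurd rfl (hchild x h).1
    · exact ⟨x, hx, reaches_deleteVertex hwf hρx.left_mem hρv h⟩
  intro c hc
  induction hc with
  | refl => exact .inr (.inr ⟨hρv, .refl⟩)
  | @tail b c _ hbc ih =>
    obtain rfl | hvb | ⟨hbv, hρb⟩ := ih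
    · exact .inr (.inl hbc)
    · exact absurd hbc ((hchild b hvb).2 c)
    · by_cases hcv : c = v
      · exact .inl hcv
      · exact .inr (.inr ⟨hcv, hρb.tail (adj_deleteVertex.2 ⟨hbc, hbv, hcv⟩)⟩)

theorem outDeg_eq_zero_iff : G.outDeg v = 0 ↔ ∀ w, ¬ G.Adj v w := by
  simp only [outDeg, Multiset.card_eq_zero, Multiset.filter_eq_nil, Prod.forall]
  exact ⟨fun h w hw => h v w hw rfl, fun h a b hab hav => h b (hav ▸ hab)⟩

theorem eq_of_inDeg_eq_one (h : G.inDeg u = 1) (ha : G.Adj a u) (hb : G.Adj b u) : a = b := by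
  obtain ⟨e, he⟩ := Multiset.card_eq_one.1 h
  have ha' : (a, u) ∈ G.E.filter (·.2 = u) := Multiset.mem_filter.2 ⟨ha, rfl⟩
  have hb' : (b, u) ∈ G.E.filter (·.2 = u) := Multiset.mem_filter.2 ⟨hb, rfl⟩
  rw [he, Multiset.mem_singleton] at ha' hb'
  exact congrArg Prod.fst (ha'.trans hb'.symm)

theorem eq_of_outDeg_eq_one (h : G.outDeg u = 1) (ha : G.Adj u a) (hb : G.Adj u b) : a = b := by
  obtain ⟨e, he⟩ := Multiset.card_eq_one.1 h
  have ha' : (u, a) ∈ G.E.filter (·.1 = u) := Multiset.mem_filter.2 ⟨ha, rfl⟩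
  have hb' : (u, b) ∈ G.E.filter (·.1 = u) := Multiset.mem_filter.2 ⟨hb, rfl⟩
  rw [he, Multiset.mem_singleton] at ha' hb'
  exact congrArg Prod.snd (ha'.trans hb'.symm)

theorem exists_adj_ne_of_outDeg_eq_two (hnp : ∀ e, G.E.count e ≤ 1) (h : G.outDeg v = 2)
    (u : α) : ∃ w ≠ u, G.Adj v w := by
  by_contra! hall
  have hrep : G.E.filter (·.1 = v) = Multiset.replicate 2 (v, u) := by
    refine Multiset.eq_replicate.2 ⟨h, fun e he => ?_⟩
    obtain ⟨heE, rfl⟩ := Multiset.mem_filter.1 he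
    by_contra hne
    exact hall e.2 (fun h => hne (Prod.ext rfl h)) heE
  have := Multiset.count_le_of_le (v, u) (Multiset.filter_le (·.1 = v) G.E)
  rw [hrep, Multiset.count_replicate_self] at this
  exact absurd (this.trans (hnp _)) (by norm_num)

/-- Satisfied when `G'` arises from `G` by deleting arcs and suppressing vertices of `S`. -/
def LiftsArcs (G G' : Digraph' α) (S : Set α) : Prop :=
  ∀ v ∉ S, (G'.deleteVertex v).Adj ≤ ReflTransGen (G.deleteVertex v).Adj

theorem LiftsArcs.of_subset {G' : Digraph' α} (h : ∀ e ∈ G'.E, e ∈ G.E) : LiftsArcs G G' ∅ :=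
  fun _ _ _ _ hab =>
    have ⟨hab, ha, hb⟩ := adj_deleteVertex.1 hab
    .single (adj_deleteVertex.2 ⟨h _ hab, ha, hb⟩)

theorem Suppress.liftsArcs {G' : Digraph' α} (h : G.Suppress w G') : LiftsArcs G G' {w} := by
  obtain ⟨-, -, p, c, hpw, hwc, -, hE⟩ := h
  intro v hv a b hab
  obtain ⟨hab, hav, hbv⟩ := adj_deleteVertex.1 hab
  have hwv : w ≠ v := Ne.symm hv
  rw [Adj, hE, Multiset.mem_add, Multiset.mem_singleton] at hab
  obtain hab | hab := hab
  · exact .single (adj_deleteVertex.2 ⟨(Multiset.mem_filter.1 hab).1, hav, hbv⟩)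
  · obtain ⟨rfl, rfl⟩ := Prod.mk.inj hab
    exact .head (adj_deleteVertex.2 ⟨hpw, hav, hwv⟩) (.single (adj_deleteVertex.2 ⟨hwc, hwv, hbv⟩))

theorem LiftsArcs.trans {G₂ G₃ : Digraph' α} {S T : Set α} (h₁ : LiftsArcs G G₂ S)
    (h₂ : LiftsArcs G₂ G₃ T) : LiftsArcs G G₃ (S ∪ T) :=
  fun v hv => (h₂ v fun h => hv (.inr h)).trans
    (reflTransGen_closed (h₁ v fun h => hv (.inl h)))

theorem StableAncestor.of_liftsArcs (hwf : G.WellFormed) {G' : Digraph' α} {S : Set α}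
    (hL : LiftsArcs G G' S) {ρ : α} {X X' : Finset α} (hρ : ρ ∈ G.V) (hX : X' ⊆ X)
    (hv : G.StableAncestor ρ X v) (hvS : v ∉ S) : G'.StableAncestor ρ X' v := by
  rw [stableAncestor_iff] at hv ⊢
  intro x hx hreach
  exact hv x (hX hx) (reaches_deleteVertex hwf hρ (Finset.mem_erase.1 hreach.left_mem).1
    (reflTransGen_closed (hL v hvS) _ _ hreach.reflTransGen))

end DeleteVertex

end Digraph'

namespace PhyloNet

open Digraph'

variable {α : Type*}

section

variable (N : PhyloNet α)

theorem not_adj_of_mem_X {x : α} (hx : x ∈ N.X) (y : α) : ¬ N.G.Adj x y := by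
  refine outDeg_eq_zero_iff.1 ?_ y
  obtain ⟨-, hE, -⟩ | ⟨-, -, hleaf, -⟩ := N.binary
  · simp [outDeg, hE]
  · exact (hleaf x hx).2.2

theorem mem_X_of_forall_not_adj {v : α} (hv : v ∈ N.G.V) (h : ∀ y, ¬ N.G.Adj v y) : v ∈ N.X := by
  obtain ⟨hV, -, hX⟩ | ⟨-, -, -, hsink, -⟩ := N.binary
  · rw [hV, Finset.mem_singleton] at hv
    simp [hX, hv]
  · exact hsink v hv (outDeg_eq_zero_iff.2 h)

theorem recoverable_of_card_V_eq_one (h : N.G.V.card = 1) : N.Recoverable := by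
  intro v hv
  obtain ⟨x, hx, -, hsink⟩ := N.acyclic.exists_sink N.wf N.root_mem
  obtain rfl : x = N.root := Finset.card_le_one.1 h.le x hx N.root N.root_mem
  simpa using hv _ (N.mem_X_of_forall_not_adj hx hsink) _ (pathFrom_singleton N.root_mem)

end

variable [DecidableEq α] {N N' : PhyloNet α} {a b u v : α}

theorem inDeg_root : N.G.inDeg N.root = 0 := by
  obtain ⟨-, hE, -⟩ | ⟨hin, -⟩ := N.binary
  · simp [inDeg, hE]
  · convert hin

theorem outDeg_root (h : N.G.Adj N.root u) : N.G.outDeg N.root = 2 := by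
  obtain ⟨-, hE, -⟩ | ⟨-, hout, -⟩ := N.binary
  · simp [Adj, hE] at h
  · convert hout

theorem degrees_of_ne_root (hv : v ∈ N.G.V) (hvr : v ≠ N.root) (hvX : v ∉ N.X) :
    (N.G.inDeg v = 1 ∧ N.G.outDeg v = 2) ∨ (N.G.inDeg v = 2 ∧ N.G.outDeg v = 1) := by
  obtain ⟨hV, -⟩ | ⟨-, -, -, -, hdeg⟩ := N.binary
  · exact absurd (Finset.mem_singleton.1 (hV ▸ hv)) hvr
  · convert hdeg v hv hvr hvX

theorem inDeg_eq_one_of_adj_of_adj (hvr : v ≠ N.root) (ha : N.G.Adj v a) (hb : N.G.Adj v b)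
    (hab : a ≠ b) : N.G.inDeg v = 1 := by
  obtain h | h := degrees_of_ne_root (N.wf _ ha).1 hvr fun hv => N.not_adj_of_mem_X hv a ha
  · exact h.1
  · exact absurd (eq_of_outDeg_eq_one h.2 ha hb) hab

theorem outDeg_eq_one_of_inDeg_eq_two (hv : N.G.Adj v a) (h : N.G.inDeg v = 2) :
    N.G.outDeg v = 1 := by
  have hvr : v ≠ N.root := by
    rintro rfl
    simp [inDeg_root] at h
  obtain h' | h' := degrees_of_ne_root (N.wf _ hv).1 hvr fun hvX => N.not_adj_of_mem_X hvX a hv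
  · exact absurd (h.symm.trans h'.1) (by norm_num)
  · exact h'.2

theorem stableAncestor_parent (hv : N.G.StableAncestor N.root N.X v) (hvr : v ≠ N.root)
    (hin : N.G.inDeg v = 1) (hu : N.G.Adj u v) :
    N.G.StableAncestor N.root N.X u ∧ u ≠ N.root := by
  have hpar : ∀ c, N.G.Adj c v → c = u := fun c hc => eq_of_inDeg_eq_one hin hc hu
  refine ⟨hv.of_unique_parent N.wf (Ne.symm hvr) hpar, ?_⟩
  rintro rfl
  obtain ⟨w, hwv, hw⟩ :=
    exists_adj_ne_of_outDeg_eq_two (fun e => by convert N.noParallel e) (outDeg_root hu) v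
  exact not_stableAncestor_of_sibling N.wf N.acyclic (fun _ => N.mem_X_of_forall_not_adj) hu hpar hw hwv hv

theorem eq_root_or_mem_of_liftsArcs (hR : N'.Recoverable) {S : Set α} (hL : LiftsArcs N.G N'.G S)
    (hX : N'.X ⊆ N.X) (hroot : N'.root = N.root) (hv : N.G.StableAncestor N.root N.X v) :
    v = N.root ∨ v ∈ S := by
  by_contra! h
  have := hR v (hroot ▸ hv.of_liftsArcs N.wf hL N.root_mem hX h.2)
  exact h.1 (hroot ▸ this)

theorem Recoverable.of_reduceCherry (hR : N'.Recoverable) (h : N.ReduceCherry a b N') :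
    N.Recoverable := by
  obtain ⟨⟨haX, hbX, hab, -⟩, hX, p, hpa, hpb, ⟨rfl, -⟩ | ⟨hpr, hroot, hsup⟩⟩ := h
  · intro v hv
    have ha := hv a haX _ (pathFrom_pair N.wf hpa)
    have hb := hv b hbX _ (pathFrom_pair N.wf hpb)
    simp only [List.mem_cons, List.not_mem_nil, or_false] at ha hb
    grind
  have hL : LiftsArcs N.G N'.G {p} := by
    simpa using (LiftsArcs.of_subset fun _ => Multiset.mem_of_mem_filter).trans hsup.liftsArcs
  have hXsub : N'.X ⊆ N.X := hX ▸ Finset.erase_subset b N.X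
  obtain ⟨-, -, g, -, hgp, -⟩ := hsup
  have hgp : N.G.Adj g p := Multiset.mem_of_mem_filter hgp
  intro v hv
  obtain rfl | rfl := eq_root_or_mem_of_liftsArcs hR hL hXsub hroot hv
  · rfl
  obtain ⟨hg, hgr⟩ := stableAncestor_parent hv hpr (inDeg_eq_one_of_adj_of_adj hpr hpa hpb hab) hgp
  obtain h | h := eq_root_or_mem_of_liftsArcs hR hL hXsub hroot hg
  exacts [absurd h hgr, absurd h (N.acyclic.ne_of_adj N.wf hgp)]

theorem Recoverable.of_cutRetCherry (hR : N'.Recoverable) (h : N.CutRetCherry a b N') :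
    N.Recoverable := by
  obtain ⟨haX, hbX, hab, hX, hroot, pa, pb, hpaa, hpbb, hpapb, hinpb, G₁, -, hG₁E, G₂, hsup₁,
    hsup₂⟩ := h
  have hL : LiftsArcs N.G N'.G {pa, pb} := by
    have := ((LiftsArcs.of_subset fun e he => Multiset.mem_of_mem_erase (hG₁E ▸ he)).trans
      hsup₁.liftsArcs).trans hsup₂.liftsArcs
    rwa [Set.empty_union, ← Set.insert_eq] at this
  obtain ⟨-, -, g, -, hgpa, -⟩ := hsup₁
  have hgpa : N.G.Adj g pa := Multiset.mem_of_mem_erase (hG₁E ▸ hgpa)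
  have hapb : a ≠ pb := by
    rintro rfl
    exact N.not_adj_of_mem_X haX b hpbb
  intro v hv
  obtain rfl | rfl | rfl := eq_root_or_mem_of_liftsArcs hR hL hX.subset hroot hv
  · rfl
  · by_contra hvr
    obtain ⟨hg, hgr⟩ :=
      stableAncestor_parent hv hvr (inDeg_eq_one_of_adj_of_adj hvr hpaa hpapb hapb) hgpa
    obtain h | rfl | rfl := eq_root_or_mem_of_liftsArcs hR hL hX.subset hroot hg
    · exact hgr h
    · exact N.acyclic.ne_of_adj N.wf hgpa rfl
    · exact N.acyclic.not_reflTransGen N.wf hpapb (.single hgpa)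
  · have hvr : N.root ≠ v := by
      rintro rfl
      simp [inDeg_root] at hinpb
    refine absurd hv (not_stableAncestor_of_children_sinks N.wf haX
      (N.reach a (N.wf _ hpaa).2) hvr hapb fun c hc => ?_)
    obtain rfl := eq_of_outDeg_eq_one (outDeg_eq_one_of_inDeg_eq_two hpbb hinpb) hc hpbb
    exact ⟨Ne.symm hab, N.not_adj_of_mem_X hbX⟩

theorem Recoverable.of_pickStep (hR : N'.Recoverable) (h : N.PickStep N') : N.Recoverable := by
  obtain ⟨a, b, h⟩ | ⟨a, b, h⟩ := h
  exacts [hR.of_reduceCherry h, hR.of_cutRetCherry h]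

end PhyloNet

/-- every orchard network is recoverable: the only stable
ancestor of the whole leaf set is the root. -/
theorem orchard_recoverable
    {α : Type*} [DecidableEq α] (N : PhyloNet α) (h : N.IsOrchard) :
    N.Recoverable := by
  obtain ⟨M, hNM, hM⟩ := h
  induction hNM using Relation.ReflTransGen.head_induction_on with
  | refl => exact M.recoverable_of_card_V_eq_one hM
  | head hstep _ ih => exact ih.of_pickStep hstep
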